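/- Let p be a prime, n ≥ 1, and T ∈ GL(n, ℚ_p). If the map T̄ : S_n → S_n is distal, then there exists a compact open subgroup V of the additive group ℚ_p^n such that for every a ∈ V \ {0} one has ‖T^{-1}(a)‖_p < 1, the map T̄_a : S_n → S_n is a homeomorphism, and T̄_a is distal. -/

import Mathlib

open scoped MatrixGroups

/-- The real number `r`, assumed to be an integer power of `p`, interpreted as the
corresponding scalar in `ℚ_p` (junk value otherwise). -/
noncomputable def realToPadic (p : ℕ) [Fact p.Prime] (r : ℝ) : ℚ_[p] :=
  (p : ℚ_[p]) ^ ⌊Real.logb p r⌋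

/-- The map `T̄` induced on the `p`-adic unit sphere by the matrix `T`:
`T̄(x) = ‖T(x)‖_p ⬝ T(x)`. -/
noncomputable def sphereMap (p : ℕ) [Fact p.Prime] {n : ℕ}
    (T : Matrix (Fin n) (Fin n) ℚ_[p]) (y : Fin n → ℚ_[p]) : Fin n → ℚ_[p] :=
  realToPadic p ‖T.mulVec y‖ • T.mulVec y

/-- The `affine` map `T̄_a` on the `p`-adic unit sphere:
`T̄_a(x) = ‖a + T(x)‖_p ⬝ (a + T(x))`. -/
noncomputable def affineSphereMap (p : ℕ) [Fact p.Prime] {n : ℕ}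
    (T : Matrix (Fin n) (Fin n) ℚ_[p]) (a : Fin n → ℚ_[p]) (y : Fin n → ℚ_[p]) :
    Fin n → ℚ_[p] :=
  realToPadic p ‖a + T.mulVec y‖ • (a + T.mulVec y)

/-- A family `S` of self-maps of a topological space `X` acts distally. -/
def ActsDistally {X : Type*} [TopologicalSpace X] (S : Set (X → X)) : Prop :=
  ∀ x y : X, x ≠ y → ∀ d : X, (d, d) ∉ closure ((fun f => (f x, f y)) '' S)

/-- A family `S` of self-maps acts distally on an invariant subset `A`. -/
def ActsDistallyOn {X : Type*} [TopologicalSpace X] (S : Set (X → X)) (A : Set X) : Prop :=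
  ∀ x ∈ A, ∀ y ∈ A, x ≠ y → ∀ d ∈ A, (d, d) ∉ closure ((fun f => (f x, f y)) '' S)

/-!
Distality of `T̄` bounds the condition numbers `‖T^k‖ ‖T^{-k}‖` of the powers of `T`.
Otherwise, rescaled by powers of `p`, the matrices `T^k` and `T^{-k}` accumulate along a
subsequence at matrices `P` and `Q` of norm one with `P Q = 0`; choosing a unit vector `x` with
`P x ≠ 0` and a vector `v ≠ 0` of norm at most one with `P v = 0`, the points `x` and `x + p v`
are proximal for `T̄`.

Given such a bound `C`, let `V` be a small ball. The map `T̄_a` lifts through the radial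
retraction `w ↦ ‖w‖_p w` to `G w = T w + ‖w‖_p⁻¹ a`. Pulling `G^k x` back by `T^{-k}` moves it by
less than `C⁻¹` from `x`, so `‖G^k x‖ = ‖T^k x‖`, and for `x, y` at distance less than `C⁻¹`
the lifts differ by exactly `T^k (y - x)`. Hence all forward iterates of `T̄_a` are
`C`-bi-Lipschitz near the diagonal, which forces distality.
-/

open Filter Topology Metric
open scoped Matrix Matrix.Norms.Elementwise

section Ultrametric

lemma norm_add_eq_left_of_norm_lt {E : Type*} [SeminormedAddGroup E] [IsUltrametricDist E]
    {x y : E} (h : ‖y‖ < ‖x‖) : ‖x + y‖ = ‖x‖ := by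
  rw [IsUltrametricDist.norm_add_eq_max_of_norm_ne_norm h.ne', max_eq_left h.le]

lemma Pi.exists_zpow_eq_norm {ι E : Type*} [Fintype ι] [NormedAddGroup E] {c : ℝ}
    (hE : ∀ x : E, x ≠ 0 → ∃ s : ℤ, ‖x‖ = c ^ s) {w : ι → E} (hw : w ≠ 0) :
    ∃ s : ℤ, ‖w‖ = c ^ s := by
  obtain ⟨j, -⟩ := Function.ne_iff.mp hw
  obtain ⟨i, -, hi⟩ := Finset.exists_mem_eq_sup Finset.univ ⟨j, Finset.mem_univ j⟩
    fun i => ‖w i‖₊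
  have hwi : ‖w‖ = ‖w i‖ := by rw [Pi.norm_def, hi]; rfl
  have hwi0 : w i ≠ 0 := fun h => hw (norm_eq_zero.mp (by rw [hwi, h, norm_zero]))
  exact (hE (w i) hwi0).imp fun s hs => hwi.trans hs

variable {R : Type*} [NormedRing R] [IsUltrametricDist R] {l m n : Type*}
  [Fintype l] [Fintype m] [Fintype n]

lemma Matrix.norm_mulVec_le_of_isUltrametricDist (A : Matrix m n R) (v : n → R) :
    ‖A *ᵥ v‖ ≤ ‖A‖ * ‖v‖ := by
  refine (pi_norm_le_iff_of_nonneg (by positivity)).mpr fun i => ?_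
  refine IsUltrametricDist.norm_sum_le_of_forall_le_of_nonneg (by positivity) fun j _ => ?_
  exact (norm_mul_le _ _).trans (mul_le_mul A.norm_entry_le_entrywise_sup_norm
    (norm_le_pi_norm v j) (norm_nonneg _) (norm_nonneg _))

lemma Matrix.norm_mul_le_of_isUltrametricDist (A : Matrix l m R) (B : Matrix m n R) :
    ‖A * B‖ ≤ ‖A‖ * ‖B‖ := by
  refine (Matrix.norm_le_iff (by positivity)).mpr fun i j => ?_
  refine IsUltrametricDist.norm_sum_le_of_forall_le_of_nonneg (by positivity) fun k _ => ?_
  exact (norm_mul_le _ _).trans (mul_le_mul A.norm_entry_le_entrywise_sup_norm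
    B.norm_entry_le_entrywise_sup_norm (norm_nonneg _) (norm_nonneg _))

end Ultrametric

lemma Matrix.norm_one_le_one {R n : Type*} [NormedRing R] [NormOneClass R] [Fintype n]
    [DecidableEq n] : ‖(1 : Matrix n n R)‖ ≤ 1 :=
  (Matrix.norm_le_iff zero_le_one).mpr fun i j => by
    rw [Matrix.one_apply]
    split_ifs <;> simp

section Distal

variable {X : Type*} [MetricSpace X]

lemma actsDistally_of_forall_exists_pos_le_dist {S : Set (X → X)}
    (h : ∀ x y : X, x ≠ y → ∃ c > 0, ∀ f ∈ S, c ≤ dist (f x) (f y)) : ActsDistally S := by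
  intro x y hxy d hd
  obtain ⟨c, hc, hcS⟩ := h x y hxy
  have hsub : (fun f => (f x, f y)) '' S ⊆ {q : X × X | c ≤ dist q.1 q.2} := by
    rintro _ ⟨f, hf, rfl⟩
    exact hcS f hf
  have h0 : c ≤ dist d d := closure_minimal hsub (isClosed_le continuous_const continuous_dist) hd
  exact hc.not_ge (h0.trans_eq (dist_self d))

/-- After the first time the two orbits come `ρ`-close, their distance can shrink at most by
the factor `C`. -/
lemma exists_pos_le_dist_iterate {f : X → X} (hf : Function.Injective f) {ρ C : ℝ}
    (hρ : 0 < ρ) (hC : 0 < C)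
    (hlow : ∀ k : ℕ, ∀ x y, dist x y < ρ → dist x y ≤ C * dist (f^[k] x) (f^[k] y))
    {x y : X} (hxy : x ≠ y) : ∃ c > 0, ∀ k : ℕ, c ≤ dist (f^[k] x) (f^[k] y) := by
  classical
  by_cases h : ∃ j, dist (f^[j] x) (f^[j] y) < ρ
  · have hj : 0 < dist (f^[Nat.find h] x) (f^[Nat.find h] y) :=
      dist_pos.mpr ((hf.iterate _).ne hxy)
    refine ⟨min ρ (dist (f^[Nat.find h] x) (f^[Nat.find h] y) / C), lt_min hρ (div_pos hj hC),
      fun k => ?_⟩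
    rcases lt_or_ge k (Nat.find h) with hk | hk
    · exact (min_le_left _ _).trans (not_lt.mp (Nat.find_min h hk))
    · refine (min_le_right _ _).trans ?_
      obtain ⟨i, rfl⟩ := Nat.exists_eq_add_of_le hk
      rw [div_le_iff₀' hC, add_comm, Function.iterate_add_apply, Function.iterate_add_apply]
      exact hlow i _ _ (Nat.find_spec h)
  · push Not at h
    exact ⟨ρ, hρ, h⟩

theorem actsDistally_zpow_of_bilipschitz (F : Equiv.Perm X) {ρ C : ℝ} (hρ : 0 < ρ) (hC : 0 < C)
    (hbound : ∀ k : ℕ, ∀ x y, dist x y < ρ →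
      dist (F^[k] x) (F^[k] y) ≤ C * dist x y ∧ dist x y ≤ C * dist (F^[k] x) (F^[k] y)) :
    ActsDistally {f : X → X | ∃ k : ℤ, f = ⇑(F ^ k)} := by
  refine actsDistally_of_forall_exists_pos_le_dist fun x y hxy => ?_
  obtain ⟨c, hc, hforward⟩ := exists_pos_le_dist_iterate F.injective hρ hC
    (fun k x y h => (hbound k x y h).2) hxy
  refine ⟨min c (min ρ (dist x y / C)), lt_min hc (lt_min hρ (div_pos (dist_pos.mpr hxy) hC)), ?_⟩
  rintro _ ⟨k, rfl⟩
  obtain ⟨m, rfl | rfl⟩ := Int.eq_nat_or_neg k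
  · rw [zpow_natCast, Equiv.Perm.coe_pow]
    exact (min_le_left _ _).trans (hforward m)
  · refine (min_le_right _ _).trans ?_
    -- a backward iterate that is `ρ`-close is carried back to `(x, y)` by a forward one
    by_cases hd : dist ((F ^ (-(m : ℤ))) x) ((F ^ (-(m : ℤ))) y) < ρ
    · have hback : ∀ z, F^[m] ((F ^ (-(m : ℤ))) z) = z := fun z => by
        rw [← Equiv.Perm.coe_pow, ← zpow_natCast, ← Equiv.Perm.mul_apply, ← zpow_add,
          add_neg_cancel, zpow_zero, Equiv.Perm.one_apply]
      have h := (hbound m _ _ hd).1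
      rw [hback, hback] at h
      exact (min_le_right _ _).trans ((div_le_iff₀' hC).mpr h)
    · exact (min_le_left _ _).trans (not_lt.mp hd)

end Distal

variable {p : ℕ} [Fact p.Prime]

section PadicScaling

lemma one_lt_prime_real : (1 : ℝ) < p := by exact_mod_cast (Fact.out : p.Prime).one_lt

lemma prime_real_pos : (0 : ℝ) < p := zero_lt_one.trans one_lt_prime_real

lemma realToPadic_zpow (s : ℤ) : realToPadic p ((p : ℝ) ^ s) = (p : ℚ_[p]) ^ s := by
  have hlog : Real.log p ≠ 0 := (Real.log_pos one_lt_prime_real).ne'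
  simp [realToPadic, Real.logb, Real.log_zpow, hlog]

lemma realToPadic_ne_zero (r : ℝ) : realToPadic p r ≠ 0 :=
  zpow_ne_zero _ (by exact_mod_cast (Fact.out : p.Prime).ne_zero)

lemma exists_zpow_eq_norm_vec {ι : Type*} [Fintype ι] {w : ι → ℚ_[p]} (hw : w ≠ 0) :
    ∃ s : ℤ, ‖w‖ = (p : ℝ) ^ s :=
  Pi.exists_zpow_eq_norm (fun _ hx => ⟨_, Padic.norm_eq_zpow_neg_valuation hx⟩) hw

lemma exists_zpow_eq_norm_matrix {m n : Type*} [Fintype m] [Fintype n]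
    {A : Matrix m n ℚ_[p]} (hA : A ≠ 0) : ∃ s : ℤ, ‖A‖ = (p : ℝ) ^ s :=
  Pi.exists_zpow_eq_norm (E := n → ℚ_[p]) (fun _ hx => exists_zpow_eq_norm_vec hx) hA

lemma norm_realToPadic_of_eq_zpow {r : ℝ} {s : ℤ} (hs : r = (p : ℝ) ^ s) :
    ‖realToPadic p r‖ = r⁻¹ := by
  rw [hs, realToPadic_zpow, Padic.norm_p_zpow, zpow_neg]

lemma norm_realToPadic_norm_smul {E : Type*} [SeminormedAddCommGroup E] [Module ℚ_[p] E]
    [NormSMulClass ℚ_[p] E] {w : E} {s : ℤ} (hs : ‖w‖ = (p : ℝ) ^ s) :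
    ‖realToPadic p ‖w‖ • w‖ = 1 := by
  have hw : ‖w‖ ≠ 0 := hs ▸ zpow_ne_zero _ prime_real_pos.ne'
  rw [norm_smul, norm_realToPadic_of_eq_zpow hs, inv_mul_cancel₀ hw]

end PadicScaling

section SphereProj

variable {ι : Type*} [Fintype ι]

/-- The radial retraction of `ℚ_p^ι \ {0}` onto the unit sphere. -/
noncomputable def sphereProj (p : ℕ) [Fact p.Prime] (w : ι → ℚ_[p]) : ι → ℚ_[p] :=
  realToPadic p ‖w‖ • w

lemma sphereMap_eq_sphereProj {n : ℕ} (A : Matrix (Fin n) (Fin n) ℚ_[p]) (y : Fin n → ℚ_[p]) :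
    sphereMap p A y = sphereProj p (A *ᵥ y) := rfl

lemma affineSphereMap_eq_sphereProj {n : ℕ} (A : Matrix (Fin n) (Fin n) ℚ_[p])
    (a y : Fin n → ℚ_[p]) : affineSphereMap p A a y = sphereProj p (a + A *ᵥ y) := rfl

lemma norm_realToPadic_norm {w : ι → ℚ_[p]} (hw : w ≠ 0) : ‖realToPadic p ‖w‖‖ = ‖w‖⁻¹ :=
  norm_realToPadic_of_eq_zpow (exists_zpow_eq_norm_vec hw).choose_spec

lemma norm_sphereProj {w : ι → ℚ_[p]} (hw : w ≠ 0) : ‖sphereProj p w‖ = 1 :=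
  norm_realToPadic_norm_smul (exists_zpow_eq_norm_vec hw).choose_spec

lemma sphereProj_of_norm_eq_one {w : ι → ℚ_[p]} (hw : ‖w‖ = 1) : sphereProj p w = w := by
  have h := realToPadic_zpow (p := p) 0
  rw [zpow_zero, zpow_zero] at h
  rw [sphereProj, hw, h, one_smul]

/-- `realToPadic p r` is always an integral power of `p`. -/
lemma sphereProj_realToPadic_smul (r : ℝ) (w : ι → ℚ_[p]) :
    sphereProj p (realToPadic p r • w) = sphereProj p w := by
  rcases eq_or_ne w 0 with rfl | hw
  · simp only [smul_zero]
  obtain ⟨s, hs⟩ := exists_zpow_eq_norm_vec hw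
  have hp : (p : ℚ_[p]) ≠ 0 := by exact_mod_cast (Fact.out : p.Prime).ne_zero
  have hnorm : ‖realToPadic p r • w‖ = (p : ℝ) ^ (s - ⌊Real.logb p r⌋) := by
    rw [norm_smul, realToPadic, Padic.norm_p_zpow, hs, ← zpow_add₀ prime_real_pos.ne',
      neg_add_eq_sub]
  rw [sphereProj, sphereProj, hnorm, hs, realToPadic_zpow, realToPadic_zpow, realToPadic,
    smul_smul, ← zpow_add₀ hp, sub_add_cancel]

lemma sphereProj_mulVec_sphereProj (A : Matrix ι ι ℚ_[p]) (w : ι → ℚ_[p]) :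
    sphereProj p (A *ᵥ sphereProj p w) = sphereProj p (A *ᵥ w) := by
  rw [show sphereProj p w = realToPadic p ‖w‖ • w from rfl, Matrix.mulVec_smul,
    sphereProj_realToPadic_smul]

lemma sphereProj_sub_sphereProj {w w' : ι → ℚ_[p]} (h : ‖w'‖ = ‖w‖) :
    sphereProj p w' - sphereProj p w = realToPadic p ‖w‖ • (w' - w) := by
  rw [sphereProj, sphereProj, h, smul_sub]

lemma continuousAt_sphereProj {w : ι → ℚ_[p]} (hw : w ≠ 0) : ContinuousAt (sphereProj p) w := by
  have hnorm : ∀ᶠ w' in 𝓝 w, ‖w'‖ = ‖w‖ := by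
    filter_upwards [ball_mem_nhds w (norm_pos_iff.mpr hw)] with w' hw'
    rw [mem_ball, dist_eq_norm] at hw'
    simpa using norm_add_eq_left_of_norm_lt (x := w) hw'
  refine ((continuous_const_smul (realToPadic p ‖w‖)).continuousAt).congr ?_
  filter_upwards [hnorm] with w' hw'
  rw [sphereProj, hw']

end SphereProj

section Powers

variable {n : ℕ} (T : GL (Fin n) ℚ_[p])

def CondNumBounded (C : ℝ) : Prop :=
  ∀ k : ℤ, ‖(T ^ k).val‖ * ‖(T ^ (-k)).val‖ ≤ C

lemma zpow_mulVec_zpow_mulVec (j k : ℤ) (v : Fin n → ℚ_[p]) :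
    (T ^ j).val *ᵥ ((T ^ k).val *ᵥ v) = (T ^ (j + k)).val *ᵥ v := by
  rw [Matrix.mulVec_mulVec, zpow_add, Units.val_mul]

lemma zpow_mulVec_zpow_neg_mulVec (k : ℤ) (v : Fin n → ℚ_[p]) :
    (T ^ k).val *ᵥ ((T ^ (-k)).val *ᵥ v) = v := by
  rw [zpow_mulVec_zpow_mulVec, add_neg_cancel, zpow_zero, Units.val_one, Matrix.one_mulVec]

lemma mulVec_zpow_mulVec (k : ℤ) (v : Fin n → ℚ_[p]) :
    T.val *ᵥ ((T ^ k).val *ᵥ v) = (T ^ (k + 1)).val *ᵥ v := by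
  have h := zpow_mulVec_zpow_mulVec T 1 k v
  rwa [zpow_one, add_comm] at h

lemma norm_le_norm_zpow_neg_mul (k : ℤ) (v : Fin n → ℚ_[p]) :
    ‖v‖ ≤ ‖(T ^ (-k)).val‖ * ‖(T ^ k).val *ᵥ v‖ := by
  have h := Matrix.norm_mulVec_le_of_isUltrametricDist (T ^ (-k)).val ((T ^ k).val *ᵥ v)
  rwa [zpow_mulVec_zpow_mulVec, neg_add_cancel, zpow_zero, Units.val_one,
    Matrix.one_mulVec] at h

lemma norm_zpow_mulVec_le (k : ℤ) {x : Fin n → ℚ_[p]} (hx : ‖x‖ = 1) :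
    ‖(T ^ k).val *ᵥ x‖ ≤ ‖(T ^ k).val‖ := by
  simpa [hx] using Matrix.norm_mulVec_le_of_isUltrametricDist (T ^ k).val x

lemma norm_zpow_sub_one_mulVec_le (j : ℤ) (v : Fin n → ℚ_[p]) :
    ‖(T ^ (j - 1)).val *ᵥ v‖ ≤ ‖(T ^ j).val‖ * ‖(T ^ (-1 : ℤ)).val‖ * ‖v‖ := by
  refine (Matrix.norm_mulVec_le_of_isUltrametricDist _ _).trans ?_
  rw [sub_eq_add_neg, zpow_add, Units.val_mul]
  exact mul_le_mul_of_nonneg_right (Matrix.norm_mul_le_of_isUltrametricDist _ _) (norm_nonneg _)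

lemma zpow_mulVec_ne_zero (k : ℤ) {v : Fin n → ℚ_[p]} (hv : v ≠ 0) : (T ^ k).val *ᵥ v ≠ 0 := by
  intro h
  have := norm_le_norm_zpow_neg_mul T k v
  rw [h, norm_zero, mul_zero] at this
  exact hv (norm_le_zero_iff.mp this)

lemma norm_zpow_mulVec_pos (k : ℤ) {x : Fin n → ℚ_[p]} (hx : ‖x‖ = 1) :
    0 < ‖(T ^ k).val *ᵥ x‖ :=
  norm_pos_iff.mpr (zpow_mulVec_ne_zero T k (ne_zero_of_norm_ne_zero (hx ▸ one_ne_zero)))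

variable {T} {C : ℝ}

lemma CondNumBounded.nonneg (hC : CondNumBounded T C) : 0 ≤ C :=
  (mul_nonneg (norm_nonneg _) (norm_nonneg _)).trans (hC 0)

lemma norm_zpow_le_mul_norm_mulVec (hC : CondNumBounded T C) (k : ℤ) {x : Fin n → ℚ_[p]}
    (hx : ‖x‖ = 1) : ‖(T ^ k).val‖ ≤ C * ‖(T ^ k).val *ᵥ x‖ := by
  have h := norm_le_norm_zpow_neg_mul T k x
  rw [hx] at h
  calc ‖(T ^ k).val‖ ≤ ‖(T ^ k).val‖ * (‖(T ^ (-k)).val‖ * ‖(T ^ k).val *ᵥ x‖) :=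
        le_mul_of_one_le_right (norm_nonneg _) h
    _ = (‖(T ^ k).val‖ * ‖(T ^ (-k)).val‖) * ‖(T ^ k).val *ᵥ x‖ := by ring
    _ ≤ C * ‖(T ^ k).val *ᵥ x‖ := mul_le_mul_of_nonneg_right (hC k) (norm_nonneg _)

lemma norm_mul_norm_mulVec_le (hC : CondNumBounded T C) (k : ℤ) {x : Fin n → ℚ_[p]}
    (hx : ‖x‖ = 1) (v : Fin n → ℚ_[p]) :
    ‖v‖ * ‖(T ^ k).val *ᵥ x‖ ≤ C * ‖(T ^ k).val *ᵥ v‖ :=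
  calc ‖v‖ * ‖(T ^ k).val *ᵥ x‖
      ≤ (‖(T ^ (-k)).val‖ * ‖(T ^ k).val *ᵥ v‖) * ‖(T ^ k).val‖ :=
        mul_le_mul (norm_le_norm_zpow_neg_mul T k v) (norm_zpow_mulVec_le T k hx) (norm_nonneg _)
          (by positivity)
    _ = (‖(T ^ k).val‖ * ‖(T ^ (-k)).val‖) * ‖(T ^ k).val *ᵥ v‖ := by ring
    _ ≤ C * ‖(T ^ k).val *ᵥ v‖ := mul_le_mul_of_nonneg_right (hC k) (norm_nonneg _)

lemma norm_zpow_mulVec_eq (hC : CondNumBounded T C) (k : ℤ) {x u : Fin n → ℚ_[p]}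
    (hx : ‖x‖ = 1) (hu : C * ‖u - x‖ < 1) :
    ‖(T ^ k).val *ᵥ u‖ = ‖(T ^ k).val *ᵥ x‖ := by
  have hlt : ‖(T ^ k).val *ᵥ (u - x)‖ < ‖(T ^ k).val *ᵥ x‖ :=
    calc ‖(T ^ k).val *ᵥ (u - x)‖ ≤ ‖(T ^ k).val‖ * ‖u - x‖ :=
          Matrix.norm_mulVec_le_of_isUltrametricDist _ _
      _ ≤ C * ‖(T ^ k).val *ᵥ x‖ * ‖u - x‖ :=
          mul_le_mul_of_nonneg_right (norm_zpow_le_mul_norm_mulVec hC k hx) (norm_nonneg _)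
      _ = (C * ‖u - x‖) * ‖(T ^ k).val *ᵥ x‖ := by ring
      _ < ‖(T ^ k).val *ᵥ x‖ := mul_lt_of_lt_one_left (norm_zpow_mulVec_pos T k hx) hu
  rw [← add_sub_cancel x u, Matrix.mulVec_add, norm_add_eq_left_of_norm_lt hlt]

end Powers

section AffineLift

variable {n : ℕ}

/-- The lift of `T̄_a` through `sphereProj`, see `affineSphereMap_sphereProj`. -/
noncomputable def affineLift (A : Matrix (Fin n) (Fin n) ℚ_[p]) (a w : Fin n → ℚ_[p]) :
    Fin n → ℚ_[p] :=
  A *ᵥ w + (realToPadic p ‖w‖)⁻¹ • a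

lemma affineSphereMap_sphereProj (A : Matrix (Fin n) (Fin n) ℚ_[p]) (a w : Fin n → ℚ_[p]) :
    affineSphereMap p A a (sphereProj p w) = sphereProj p (affineLift A a w) := by
  have h : a + A *ᵥ sphereProj p w = realToPadic p ‖w‖ • affineLift A a w := by
    rw [sphereProj, affineLift, Matrix.mulVec_smul, smul_add, smul_smul,
      mul_inv_cancel₀ (realToPadic_ne_zero _), one_smul, add_comm]
  rw [affineSphereMap_eq_sphereProj, h, sphereProj_realToPadic_smul]

lemma iterate_affineSphereMap (A : Matrix (Fin n) (Fin n) ℚ_[p]) (a : Fin n → ℚ_[p])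
    {x : Fin n → ℚ_[p]} (hx : ‖x‖ = 1) (k : ℕ) :
    (affineSphereMap p A a)^[k] x = sphereProj p ((affineLift A a)^[k] x) := by
  have h : Function.Semiconj (sphereProj p) (affineLift A a) (affineSphereMap p A a) :=
    fun w => (affineSphereMap_sphereProj A a w).symm
  calc (affineSphereMap p A a)^[k] x = (affineSphereMap p A a)^[k] (sphereProj p x) := by
        rw [sphereProj_of_norm_eq_one hx]
    _ = sphereProj p ((affineLift A a)^[k] x) := (h.iterate_right k x).symm

lemma affineLift_sub_affineLift (A : Matrix (Fin n) (Fin n) ℚ_[p]) (a : Fin n → ℚ_[p])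
    {w w' : Fin n → ℚ_[p]} (h : ‖w'‖ = ‖w‖) :
    affineLift A a w' - affineLift A a w = A *ᵥ (w' - w) := by
  rw [affineLift, affineLift, h, Matrix.mulVec_sub]
  abel

variable {T : GL (Fin n) ℚ_[p]} {C : ℝ} {a : Fin n → ℚ_[p]}

lemma zpow_sub_one_mulVec_affineLift (j : ℤ) (w : Fin n → ℚ_[p]) :
    (T ^ (j - 1)).val *ᵥ affineLift T.val a w =
      (T ^ j).val *ᵥ w + (realToPadic p ‖w‖)⁻¹ • (T ^ (j - 1)).val *ᵥ a := by
  have h := zpow_mulVec_zpow_mulVec T (j - 1) 1 w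
  rw [zpow_one, sub_add_cancel] at h
  rw [affineLift, Matrix.mulVec_add, Matrix.mulVec_smul, h]

/-- Pulled back by `T^{-k}`, the `k`-th iterate of `x` stays within `C ‖T⁻¹‖ ‖a‖` of `x`: each
step adds `‖G^k x‖_p⁻¹ T^{-k-1} a`, of norm at most `‖T^k‖ ‖T^{-k}‖ ‖T⁻¹‖ ‖a‖`. -/
lemma norm_iterate_affineLift (hC : CondNumBounded T C)
    (ha : C * (C * ‖(T ^ (-1 : ℤ)).val‖ * ‖a‖) < 1) {x : Fin n → ℚ_[p]} (hx : ‖x‖ = 1)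
    (k : ℕ) : ‖(affineLift T.val a)^[k] x‖ = ‖(T ^ (k : ℤ)).val *ᵥ x‖ := by
  set ε := C * ‖(T ^ (-1 : ℤ)).val‖ * ‖a‖
  have hnorm : ∀ k : ℕ, ‖(T ^ (-(k : ℤ))).val *ᵥ (affineLift T.val a)^[k] x - x‖ ≤ ε →
      ‖(affineLift T.val a)^[k] x‖ = ‖(T ^ (k : ℤ)).val *ᵥ x‖ := fun k hk => by
    have h := norm_zpow_mulVec_eq hC k hx ((mul_le_mul_of_nonneg_left hk hC.nonneg).trans_lt ha)
    rwa [zpow_mulVec_zpow_neg_mulVec] at h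
  refine hnorm k ?_
  induction k with
  | zero => simpa using mul_nonneg (mul_nonneg hC.nonneg (norm_nonneg _)) (norm_nonneg _)
  | succ k ih =>
    have hxk : (affineLift T.val a)^[k] x ≠ 0 := by
      rw [← norm_ne_zero_iff, hnorm k ih]
      exact (norm_zpow_mulVec_pos T k hx).ne'
    have hpow : -((k + 1 : ℕ) : ℤ) = -(k : ℤ) - 1 := by push_cast; ring
    rw [Function.iterate_succ_apply', hpow, zpow_sub_one_mulVec_affineLift, add_sub_right_comm]
    refine (IsUltrametricDist.norm_add_le_max _ _).trans (max_le ih ?_)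
    rw [norm_smul, norm_inv, norm_realToPadic_norm hxk, inv_inv, hnorm k ih]
    calc ‖(T ^ (k : ℤ)).val *ᵥ x‖ * ‖(T ^ (-(k : ℤ) - 1)).val *ᵥ a‖
        ≤ ‖(T ^ (k : ℤ)).val‖ * (‖(T ^ (-(k : ℤ))).val‖ * ‖(T ^ (-1 : ℤ)).val‖ * ‖a‖) :=
          mul_le_mul (norm_zpow_mulVec_le T k hx) (norm_zpow_sub_one_mulVec_le T _ a)
            (norm_nonneg _) (norm_nonneg _)
      _ = (‖(T ^ (k : ℤ)).val‖ * ‖(T ^ (-(k : ℤ))).val‖) * ‖(T ^ (-1 : ℤ)).val‖ * ‖a‖ := by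
          ring
      _ ≤ ε := mul_le_mul_of_nonneg_right (mul_le_mul_of_nonneg_right (hC k) (norm_nonneg _))
          (norm_nonneg _)

lemma iterate_affineLift_sub (hC : CondNumBounded T C)
    (ha : C * (C * ‖(T ^ (-1 : ℤ)).val‖ * ‖a‖) < 1) {x y : Fin n → ℚ_[p]} (hx : ‖x‖ = 1)
    (hy : ‖y‖ = 1) (hxy : C * ‖y - x‖ < 1) (k : ℕ) :
    (affineLift T.val a)^[k] y - (affineLift T.val a)^[k] x = (T ^ (k : ℤ)).val *ᵥ (y - x) := by
  induction k with
  | zero => simp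
  | succ k ih =>
    have h : ‖(affineLift T.val a)^[k] y‖ = ‖(affineLift T.val a)^[k] x‖ := by
      rw [norm_iterate_affineLift hC ha hy, norm_iterate_affineLift hC ha hx,
        norm_zpow_mulVec_eq hC k hx hxy]
    rw [Function.iterate_succ_apply', Function.iterate_succ_apply',
      affineLift_sub_affineLift _ _ h, ih, mulVec_zpow_mulVec]
    push_cast
    rfl

lemma norm_iterate_affineSphereMap_sub (hC : CondNumBounded T C)
    (ha : C * (C * ‖(T ^ (-1 : ℤ)).val‖ * ‖a‖) < 1) {x y : Fin n → ℚ_[p]} (hx : ‖x‖ = 1)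
    (hy : ‖y‖ = 1) (hxy : C * ‖y - x‖ < 1) (k : ℕ) :
    ‖(affineSphereMap p T.val a)^[k] y - (affineSphereMap p T.val a)^[k] x‖ =
      ‖(T ^ (k : ℤ)).val *ᵥ (y - x)‖ / ‖(T ^ (k : ℤ)).val *ᵥ x‖ := by
  have hG : ‖(affineLift T.val a)^[k] y‖ = ‖(affineLift T.val a)^[k] x‖ := by
    rw [norm_iterate_affineLift hC ha hy, norm_iterate_affineLift hC ha hx,
      norm_zpow_mulVec_eq hC k hx hxy]
  have hG0 : (affineLift T.val a)^[k] x ≠ 0 := by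
    rw [← norm_ne_zero_iff, norm_iterate_affineLift hC ha hx]
    exact (norm_zpow_mulVec_pos T k hx).ne'
  rw [iterate_affineSphereMap _ _ hx, iterate_affineSphereMap _ _ hy, sphereProj_sub_sphereProj hG,
    iterate_affineLift_sub hC ha hx hy hxy, norm_smul, norm_realToPadic_norm hG0,
    norm_iterate_affineLift hC ha hx, inv_mul_eq_div]

lemma norm_iterate_affineSphereMap_sub_le_and_ge (hC : CondNumBounded T C)
    (ha : C * (C * ‖(T ^ (-1 : ℤ)).val‖ * ‖a‖) < 1) {x y : Fin n → ℚ_[p]} (hx : ‖x‖ = 1)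
    (hy : ‖y‖ = 1) (hxy : C * ‖y - x‖ < 1) (k : ℕ) :
    ‖(affineSphereMap p T.val a)^[k] y - (affineSphereMap p T.val a)^[k] x‖ ≤ C * ‖y - x‖ ∧
      ‖y - x‖ ≤ C * ‖(affineSphereMap p T.val a)^[k] y - (affineSphereMap p T.val a)^[k] x‖ := by
  have hpos := norm_zpow_mulVec_pos T k hx
  rw [norm_iterate_affineSphereMap_sub hC ha hx hy hxy, div_le_iff₀ hpos, ← mul_div_assoc,
    le_div_iff₀ hpos]
  refine ⟨(Matrix.norm_mulVec_le_of_isUltrametricDist _ _).trans ?_,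
    norm_mul_norm_mulVec_le hC k hx _⟩
  calc ‖(T ^ (k : ℤ)).val‖ * ‖y - x‖ ≤ C * ‖(T ^ (k : ℤ)).val *ᵥ x‖ * ‖y - x‖ :=
        mul_le_mul_of_nonneg_right (norm_zpow_le_mul_norm_mulVec hC k hx) (norm_nonneg _)
    _ = C * ‖y - x‖ * ‖(T ^ (k : ℤ)).val *ᵥ x‖ := by ring

end AffineLift

section Homeomorph

variable {n : ℕ} (T : GL (Fin n) ℚ_[p]) (a : Fin n → ℚ_[p])

lemma mulVec_inv_mulVec (v : Fin n → ℚ_[p]) : T.val *ᵥ (T⁻¹.val *ᵥ v) = v := by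
  rw [Matrix.mulVec_mulVec, Units.mul_inv, Matrix.one_mulVec]

lemma inv_mulVec_mulVec (v : Fin n → ℚ_[p]) : T⁻¹.val *ᵥ (T.val *ᵥ v) = v := by
  rw [Matrix.mulVec_mulVec, Units.inv_mul, Matrix.one_mulVec]

lemma affineSphereMap_eq_sphereProj_mulVec (x : Fin n → ℚ_[p]) :
    affineSphereMap p T.val a x = sphereProj p (T.val *ᵥ (T⁻¹.val *ᵥ a + x)) := by
  rw [affineSphereMap_eq_sphereProj, Matrix.mulVec_add, mulVec_inv_mulVec]

variable {T a}

lemma norm_inv_mulVec_add (hb : ‖T⁻¹.val *ᵥ a‖ < 1) {x : Fin n → ℚ_[p]} (hx : ‖x‖ = 1) :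
    ‖T⁻¹.val *ᵥ a + x‖ = 1 := by
  rw [add_comm, norm_add_eq_left_of_norm_lt (by rwa [hx]), hx]

lemma mulVec_inv_mulVec_add_ne_zero (hb : ‖T⁻¹.val *ᵥ a‖ < 1) {x : Fin n → ℚ_[p]}
    (hx : ‖x‖ = 1) : T.val *ᵥ (T⁻¹.val *ᵥ a + x) ≠ 0 := fun h => by
  have h1 := norm_inv_mulVec_add hb hx
  rw [← inv_mulVec_mulVec T (T⁻¹.val *ᵥ a + x), h, Matrix.mulVec_zero, norm_zero] at h1
  exact zero_ne_one h1

lemma norm_affineSphereMap (hb : ‖T⁻¹.val *ᵥ a‖ < 1) {x : Fin n → ℚ_[p]} (hx : ‖x‖ = 1) :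
    ‖affineSphereMap p T.val a x‖ = 1 := by
  rw [affineSphereMap_eq_sphereProj_mulVec]
  exact norm_sphereProj (mulVec_inv_mulVec_add_ne_zero hb hx)

lemma norm_sphereProj_inv_mulVec_sub (hb : ‖T⁻¹.val *ᵥ a‖ < 1) {z : Fin n → ℚ_[p]}
    (hz : ‖z‖ = 1) : ‖sphereProj p (T⁻¹.val *ᵥ z) - T⁻¹.val *ᵥ a‖ = 1 := by
  have hTz : T⁻¹.val *ᵥ z ≠ 0 := fun h => by
    rw [← mulVec_inv_mulVec T z, h, Matrix.mulVec_zero, norm_zero] at hz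
    exact zero_ne_one hz
  have h1 := norm_sphereProj (p := p) hTz
  rw [sub_eq_add_neg, norm_add_eq_left_of_norm_lt (by rwa [norm_neg, h1]), h1]

lemma affineSphereMap_sphereProj_inv_mulVec_sub {z : Fin n → ℚ_[p]} (hz : ‖z‖ = 1) :
    affineSphereMap p T.val a (sphereProj p (T⁻¹.val *ᵥ z) - T⁻¹.val *ᵥ a) = z := by
  rw [affineSphereMap_eq_sphereProj_mulVec, add_sub_cancel, sphereProj_mulVec_sphereProj,
    mulVec_inv_mulVec, sphereProj_of_norm_eq_one hz]

lemma sphereProj_inv_mulVec_affineSphereMap_sub (hb : ‖T⁻¹.val *ᵥ a‖ < 1)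
    {x : Fin n → ℚ_[p]} (hx : ‖x‖ = 1) :
    sphereProj p (T⁻¹.val *ᵥ affineSphereMap p T.val a x) - T⁻¹.val *ᵥ a = x := by
  rw [affineSphereMap_eq_sphereProj_mulVec, sphereProj_mulVec_sphereProj, inv_mulVec_mulVec,
    sphereProj_of_norm_eq_one (norm_inv_mulVec_add hb hx), add_sub_cancel_left]

lemma continuousAt_affineSphereMap {x : Fin n → ℚ_[p]} (hx : a + T.val *ᵥ x ≠ 0) :
    ContinuousAt (affineSphereMap p T.val a) x :=
  (continuousAt_sphereProj hx).comp (f := fun y => a + T.val *ᵥ y)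
    (continuous_const.add (continuous_const.matrix_mulVec continuous_id)).continuousAt

variable (T a)

theorem exists_homeomorph_affineSphereMap (hb : ‖T⁻¹.val *ᵥ a‖ < 1) :
    ∃ F : sphere (0 : Fin n → ℚ_[p]) 1 ≃ₜ sphere (0 : Fin n → ℚ_[p]) 1,
      ∀ x, (F x : Fin n → ℚ_[p]) = affineSphereMap p T.val a x := by
  have : CompactSpace (sphere (0 : Fin n → ℚ_[p]) 1) :=
    isCompact_iff_compactSpace.mp (isCompact_sphere 0 1)
  let E : sphere (0 : Fin n → ℚ_[p]) 1 ≃ sphere (0 : Fin n → ℚ_[p]) 1 :=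
    { toFun x := ⟨affineSphereMap p T.val a x,
        mem_sphere_zero_iff_norm.mpr (norm_affineSphereMap hb (norm_eq_of_mem_sphere x))⟩
      invFun z := ⟨sphereProj p (T⁻¹.val *ᵥ z) - T⁻¹.val *ᵥ a,
        mem_sphere_zero_iff_norm.mpr (norm_sphereProj_inv_mulVec_sub hb (norm_eq_of_mem_sphere z))⟩
      left_inv x := Subtype.ext
        (sphereProj_inv_mulVec_affineSphereMap_sub hb (norm_eq_of_mem_sphere x))
      right_inv z := Subtype.ext
        (affineSphereMap_sphereProj_inv_mulVec_sub (norm_eq_of_mem_sphere z)) }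
  have hE : Continuous E := by
    refine Continuous.subtype_mk (continuous_iff_continuousAt.mpr fun x => ?_) _
    refine (continuousAt_affineSphereMap ?_).comp continuous_subtype_val.continuousAt
    rw [← mulVec_inv_mulVec T a, ← Matrix.mulVec_add]
    exact mulVec_inv_mulVec_add_ne_zero hb (norm_eq_of_mem_sphere x)
  exact ⟨hE.homeoOfEquivCompactToT2, fun _ => rfl⟩

end Homeomorph

theorem actsDistally_affineSphereMap {n : ℕ} {T : GL (Fin n) ℚ_[p]} {C : ℝ}
    {a : Fin n → ℚ_[p]} (hC : CondNumBounded T C) (hC0 : 0 < C)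
    (ha : C * (C * ‖(T ^ (-1 : ℤ)).val‖ * ‖a‖) < 1)
    (F : sphere (0 : Fin n → ℚ_[p]) 1 ≃ₜ sphere (0 : Fin n → ℚ_[p]) 1)
    (hF : ∀ x, (F x : Fin n → ℚ_[p]) = affineSphereMap p T.val a x) :
    ActsDistally {f : sphere (0 : Fin n → ℚ_[p]) 1 → sphere (0 : Fin n → ℚ_[p]) 1 |
      ∃ k : ℤ, f = ⇑(F.toEquiv ^ k)} := by
  have hsemi : Function.Semiconj Subtype.val F.toEquiv (affineSphereMap p T.val a) :=
    fun x => hF x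
  refine actsDistally_zpow_of_bilipschitz F.toEquiv (inv_pos.mpr hC0) hC0 fun k x y hxy => ?_
  rw [Subtype.dist_eq, dist_eq_norm] at hxy
  simp only [Subtype.dist_eq, dist_eq_norm, hsemi.iterate_right k _]
  refine norm_iterate_affineSphereMap_sub_le_and_ge hC ha (norm_eq_of_mem_sphere y)
    (norm_eq_of_mem_sphere x) ?_ k
  calc C * ‖(x : Fin n → ℚ_[p]) - y‖ < C * C⁻¹ := mul_lt_mul_of_pos_left hxy hC0
    _ = 1 := mul_inv_cancel₀ hC0.ne'

section CondNumBoundedOfDistal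

variable {n : ℕ} {T : GL (Fin n) ℚ_[p]}

variable (T) in
noncomputable def normalizedZpow (k : ℤ) : Matrix (Fin n) (Fin n) ℚ_[p] :=
  realToPadic p ‖(T ^ k).val‖ • (T ^ k).val

lemma sphereMap_zpow_eq_sphereProj (k : ℤ) (v : Fin n → ℚ_[p]) :
    sphereMap p (T ^ k).val v = sphereProj p (normalizedZpow T k *ᵥ v) := by
  rw [normalizedZpow, Matrix.smul_mulVec, sphereProj_realToPadic_smul, sphereMap_eq_sphereProj]

lemma norm_realToPadic_norm_zpow {k : ℤ} (hk : ‖(T ^ k).val‖ ≠ 0) :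
    ‖realToPadic p ‖(T ^ k).val‖‖ = ‖(T ^ k).val‖⁻¹ :=
  norm_realToPadic_of_eq_zpow (exists_zpow_eq_norm_matrix (norm_ne_zero_iff.mp hk)).choose_spec

lemma norm_normalizedZpow {k : ℤ} (hk : ‖(T ^ k).val‖ ≠ 0) : ‖normalizedZpow T k‖ = 1 := by
  rw [normalizedZpow, norm_smul, norm_realToPadic_norm_zpow hk, inv_mul_cancel₀ hk]

lemma norm_normalizedZpow_mul_le {k : ℤ} (hk : ‖(T ^ k).val‖ * ‖(T ^ (-k)).val‖ ≠ 0) :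
    ‖normalizedZpow T k * normalizedZpow T (-k)‖ ≤ (‖(T ^ k).val‖ * ‖(T ^ (-k)).val‖)⁻¹ := by
  have h1 : (T ^ k).val * (T ^ (-k)).val = 1 := by
    rw [← Units.val_mul, ← zpow_add, add_neg_cancel, zpow_zero, Units.val_one]
  rw [normalizedZpow, normalizedZpow, smul_mul_smul_comm, h1, norm_smul, norm_mul,
    norm_realToPadic_norm_zpow (left_ne_zero_of_mul hk),
    norm_realToPadic_norm_zpow (right_ne_zero_of_mul hk), ← mul_inv]
  exact mul_le_of_le_one_right (by positivity) Matrix.norm_one_le_one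

lemma exists_ne_mulVec_eq_of_mul_eq_zero {P Q : Matrix (Fin n) (Fin n) ℚ_[p]} (hP : P ≠ 0)
    (hQ : Q ≠ 0) (hQ1 : ‖Q‖ ≤ 1) (hPQ : P * Q = 0) :
    ∃ x y : Fin n → ℚ_[p], ‖x‖ = 1 ∧ ‖y‖ = 1 ∧ x ≠ y ∧ P *ᵥ x ≠ 0 ∧ P *ᵥ y = P *ᵥ x := by
  have hcol : ∀ {M : Matrix (Fin n) (Fin n) ℚ_[p]}, M ≠ 0 → ∃ j, M *ᵥ Pi.single j 1 ≠ 0 := by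
    intro M hM
    obtain ⟨i, j, hij⟩ : ∃ i j, M i j ≠ 0 := by
      by_contra! h
      exact hM (Matrix.ext h)
    exact ⟨j, fun h => hij (by simpa using congrFun h i)⟩
  obtain ⟨j, hPj⟩ := hcol hP
  obtain ⟨j', hQj'⟩ := hcol hQ
  set v := Q *ᵥ Pi.single j' (1 : ℚ_[p])
  have hv : ‖v‖ ≤ 1 := by
    refine (Matrix.norm_mulVec_le_of_isUltrametricDist Q _).trans ?_
    rwa [Pi.norm_single, norm_one, mul_one]
  have hpv : ‖(p : ℚ_[p]) • v‖ < 1 := by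
    rw [norm_smul, Padic.norm_p]
    exact mul_lt_one_of_nonneg_of_lt_one_left (by positivity)
      (inv_lt_one_of_one_lt₀ one_lt_prime_real) hv
  have hx : ‖(Pi.single j 1 : Fin n → ℚ_[p])‖ = 1 := by rw [Pi.norm_single, norm_one]
  refine ⟨Pi.single j 1, Pi.single j 1 + (p : ℚ_[p]) • v, hx, ?_, ?_, hPj, ?_⟩
  · rw [norm_add_eq_left_of_norm_lt (by rwa [hx]), hx]
  · exact fun h => smul_ne_zero (by exact_mod_cast (Fact.out : p.Prime).ne_zero) hQj'
      (add_eq_left.mp h.symm)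
  · rw [Matrix.mulVec_add, Matrix.mulVec_smul, Matrix.mulVec_mulVec, hPQ, Matrix.zero_mulVec,
      smul_zero, add_zero]

lemma not_actsDistallyOn_of_tendsto {k : ℕ → ℤ} {P : Matrix (Fin n) (Fin n) ℚ_[p]}
    (hlim : Tendsto (fun l => normalizedZpow T (k l)) atTop (𝓝 P))
    {x y : Fin n → ℚ_[p]} (hx : ‖x‖ = 1) (hy : ‖y‖ = 1) (hxy : x ≠ y) (hPx : P *ᵥ x ≠ 0)
    (hPy : P *ᵥ y = P *ᵥ x) :
    ¬ ActsDistallyOn {f : (Fin n → ℚ_[p]) → Fin n → ℚ_[p] |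
        ∃ k : ℤ, f = sphereMap p (T ^ k).val} (sphere 0 1) := by
  have hconv : ∀ v, P *ᵥ v ≠ 0 →
      Tendsto (fun l => sphereMap p (T ^ k l).val v) atTop (𝓝 (sphereProj p (P *ᵥ v))) := by
    intro v hv
    simp only [sphereMap_zpow_eq_sphereProj]
    exact (continuousAt_sphereProj hv).tendsto.comp
      (((continuous_id.matrix_mulVec continuous_const).tendsto P).comp hlim)
  intro hT
  refine hT x (mem_sphere_zero_iff_norm.mpr hx) y (mem_sphere_zero_iff_norm.mpr hy) hxy _
    (mem_sphere_zero_iff_norm.mpr (norm_sphereProj hPx)) ?_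
  refine mem_closure_of_tendsto ((hconv x hPx).prodMk_nhds ?_)
    (Eventually.of_forall fun l => ⟨_, ⟨k l, rfl⟩, rfl⟩)
  simpa only [hPy] using hconv y (hPy ▸ hPx)

lemma exists_tendsto_of_not_condNumBounded (h : ∀ C, ¬ CondNumBounded T C) :
    ∃ (k : ℕ → ℤ) (P Q : Matrix (Fin n) (Fin n) ℚ_[p]),
      Tendsto (fun l => normalizedZpow T (k l)) atTop (𝓝 P) ∧ ‖P‖ = 1 ∧ ‖Q‖ = 1 ∧ P * Q = 0 := by
  have : ProperSpace (Matrix (Fin n) (Fin n) ℚ_[p]) :=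
    inferInstanceAs (ProperSpace (Fin n → Fin n → ℚ_[p]))
  have h' : ∀ l : ℕ, ∃ k : ℤ, (l : ℝ) + 1 < ‖(T ^ k).val‖ * ‖(T ^ (-k)).val‖ := fun l => by
    simpa [CondNumBounded] using h ((l : ℝ) + 1)
  choose k hk using h'
  have hk0 : ∀ l, ‖(T ^ k l).val‖ * ‖(T ^ (-k l)).val‖ ≠ 0 := fun l =>
    ne_of_gt ((by positivity : (0 : ℝ) < l + 1).trans (hk l))
  set u : ℕ → Matrix (Fin n) (Fin n) ℚ_[p] × Matrix (Fin n) (Fin n) ℚ_[p] :=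
    fun l => (normalizedZpow T (k l), normalizedZpow T (-k l))
  have hmem : ∀ l, u l ∈ closedBall (0 : Matrix (Fin n) (Fin n) ℚ_[p]) 1 ×ˢ closedBall 0 1 :=
    fun l => ⟨mem_closedBall_zero_iff.mpr (norm_normalizedZpow (left_ne_zero_of_mul (hk0 l))).le,
      mem_closedBall_zero_iff.mpr (norm_normalizedZpow (right_ne_zero_of_mul (hk0 l))).le⟩
  obtain ⟨⟨P, Q⟩, -, φ, hφ, hlim⟩ :=
    ((isCompact_closedBall _ _).prod (isCompact_closedBall _ _)).tendsto_subseq hmem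
  have hnorm : ∀ {R : Matrix (Fin n) (Fin n) ℚ_[p]} {w : ℕ → Matrix (Fin n) (Fin n) ℚ_[p]},
      Tendsto w atTop (𝓝 R) → (∀ l, ‖w l‖ = 1) → ‖R‖ = 1 := fun hw hw1 =>
    tendsto_nhds_unique ((continuous_norm.tendsto _).comp hw) (by simp [Function.comp_def, hw1])
  have hP := (continuous_fst.tendsto _).comp hlim
  have hQ := (continuous_snd.tendsto _).comp hlim
  refine ⟨k ∘ φ, P, Q, hP, hnorm hP fun l => norm_normalizedZpow (left_ne_zero_of_mul (hk0 _)),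
    hnorm hQ fun l => norm_normalizedZpow (right_ne_zero_of_mul (hk0 _)), ?_⟩
  refine tendsto_nhds_unique (((continuous_fst.mul continuous_snd).tendsto (P, Q)).comp hlim)
    (squeeze_zero_norm (fun l => ?_)
      ((tendsto_one_div_add_atTop_nhds_zero_nat).comp hφ.tendsto_atTop))
  simp only [Function.comp_apply, Pi.mul_apply, u, one_div]
  exact (norm_normalizedZpow_mul_le (hk0 (φ l))).trans (inv_anti₀ (by positivity) (hk (φ l)).le)

theorem exists_condNumBounded_of_actsDistallyOn
    (hT : ActsDistallyOn {f : (Fin n → ℚ_[p]) → Fin n → ℚ_[p] |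
      ∃ k : ℤ, f = sphereMap p (T ^ k).val} (sphere 0 1)) :
    ∃ C, CondNumBounded T C := by
  by_contra! h
  obtain ⟨k, P, Q, hlim, hP, hQ, hPQ⟩ := exists_tendsto_of_not_condNumBounded h
  obtain ⟨x, y, hx, hy, hxy, hPx, hPy⟩ :=
    exists_ne_mulVec_eq_of_mul_eq_zero (norm_ne_zero_iff.mp (hP ▸ one_ne_zero))
      (norm_ne_zero_iff.mp (hQ ▸ one_ne_zero)) hQ.le hPQ
  exact not_actsDistallyOn_of_tendsto hlim hx hy hxy hPx hPy hT

end CondNumBoundedOfDistal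

theorem stmt15_general (p : ℕ) [Fact p.Prime] (n : ℕ) (T : GL (Fin n) ℚ_[p])
    (hT : ActsDistallyOn {f : (Fin n → ℚ_[p]) → Fin n → ℚ_[p] |
        ∃ k : ℤ, f = sphereMap p ((T ^ k : GL (Fin n) ℚ_[p]) : Matrix (Fin n) (Fin n) ℚ_[p])}
      (Metric.sphere (0 : Fin n → ℚ_[p]) 1)) :
    ∃ V : AddSubgroup (Fin n → ℚ_[p]),
      IsCompact (V : Set (Fin n → ℚ_[p])) ∧ IsOpen (V : Set (Fin n → ℚ_[p])) ∧
      ∀ a ∈ V, a ≠ 0 →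
        ‖((T⁻¹ : GL (Fin n) ℚ_[p]) : Matrix (Fin n) (Fin n) ℚ_[p]).mulVec a‖ < 1 ∧
        ∃ F : (Metric.sphere (0 : Fin n → ℚ_[p]) 1) ≃ₜ (Metric.sphere (0 : Fin n → ℚ_[p]) 1),
          (∀ x : (Metric.sphere (0 : Fin n → ℚ_[p]) 1),
            (F x : Fin n → ℚ_[p]) =
              affineSphereMap p (T : Matrix (Fin n) (Fin n) ℚ_[p]) a x) ∧
          ActsDistally {f : (Metric.sphere (0 : Fin n → ℚ_[p]) 1) →
              (Metric.sphere (0 : Fin n → ℚ_[p]) 1) |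
            ∃ k : ℤ, f = ⇑(F.toEquiv ^ k)} := by
  obtain ⟨C₀, hC₀⟩ := exists_condNumBounded_of_actsDistallyOn hT
  set C := max C₀ 1
  have hC : CondNumBounded T C := fun k => (hC₀ k).trans (le_max_left _ _)
  have hC1 : 1 ≤ C := le_max_right _ _
  set K := C * C * ‖(T ^ (-1 : ℤ)).val‖
  have hr : 0 < (K + 1)⁻¹ := by positivity
  let V := IsUltrametricDist.closedBall_openAddSubgroup (Fin n → ℚ_[p]) hr
  refine ⟨V.toAddSubgroup, isCompact_closedBall 0 _, V.isOpen, fun a ha _ => ?_⟩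
  have hKa : K * ‖a‖ < 1 := by
    refine (mul_le_mul_of_nonneg_left (mem_closedBall_zero_iff.mp ha) (by positivity)).trans_lt ?_
    rw [mul_inv_lt_iff₀ (by positivity)]
    linarith
  have hb : ‖T⁻¹.val *ᵥ a‖ < 1 := by
    refine ((Matrix.norm_mulVec_le_of_isUltrametricDist _ _).trans ?_).trans_lt hKa
    rw [← zpow_neg_one]
    exact mul_le_mul_of_nonneg_right (le_mul_of_one_le_left (norm_nonneg _)
      (one_le_mul_of_one_le_of_one_le hC1 hC1)) (norm_nonneg _)
  obtain ⟨F, hF⟩ := exists_homeomorph_affineSphereMap T a hb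
  refine ⟨hb, F, hF, actsDistally_affineSphereMap hC (zero_lt_one.trans_le hC1) ?_ F hF⟩
  simpa only [K, mul_assoc] using hKa

/-- If `T̄` is distal on the `p`-adic unit sphere, then there is a compact open additive
subgroup `V` of `ℚ_p^n` such that for every nonzero `a ∈ V` we have `‖T⁻¹(a)‖_p < 1`, the map
`T̄_a` is a homeomorphism of the sphere, and `T̄_a` is distal. -/
theorem stmt15 (p : ℕ) [Fact p.Prime] (n : ℕ) (hn : 1 ≤ n) (T : GL (Fin n) ℚ_[p])
    (hT : ActsDistallyOn {f : (Fin n → ℚ_[p]) → Fin n → ℚ_[p] |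
        ∃ k : ℤ, f = sphereMap p ((T ^ k : GL (Fin n) ℚ_[p]) : Matrix (Fin n) (Fin n) ℚ_[p])}
      (Metric.sphere (0 : Fin n → ℚ_[p]) 1)) :
    ∃ V : AddSubgroup (Fin n → ℚ_[p]),
      IsCompact (V : Set (Fin n → ℚ_[p])) ∧ IsOpen (V : Set (Fin n → ℚ_[p])) ∧
      ∀ a ∈ V, a ≠ 0 →
        ‖((T⁻¹ : GL (Fin n) ℚ_[p]) : Matrix (Fin n) (Fin n) ℚ_[p]).mulVec a‖ < 1 ∧
        ∃ F : (Metric.sphere (0 : Fin n → ℚ_[p]) 1) ≃ₜ (Metric.sphere (0 : Fin n → ℚ_[p]) 1),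
          (∀ x : (Metric.sphere (0 : Fin n → ℚ_[p]) 1),
            (F x : Fin n → ℚ_[p]) =
              affineSphereMap p (T : Matrix (Fin n) (Fin n) ℚ_[p]) a x) ∧
          ActsDistally {f : (Metric.sphere (0 : Fin n → ℚ_[p]) 1) →
              (Metric.sphere (0 : Fin n → ℚ_[p]) 1) |
            ∃ k : ℤ, f = ⇑(F.toEquiv ^ k)} :=
  stmt15_general p n T hT
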